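/- The piecewise function qᵉ : [0,∞) → ℝ (equal to r for r < 1/ε, to −(ε/2)(r − 2/ε)² + 3/(2ε) for 1/ε ≤ r < 2/ε, and to 3/(2ε) for r ≥ 2/ε) is continuously differentiable on (0,∞) and satisfies |(d/dr)(qᵉ(r) − r)| ≤ 2εr for all r > 0. -/

import Mathlib

/-!
On `[1/ε, 2/ε]` the middle branch of `qtrunc ε` is a parabola whose slope `2 - ε r` falls from
`1` to `0`, so it joins the line `r` and the constant `3/(2ε)` tangentially. Hence `qtrunc ε` is
differentiable on all of `ℝ` with the continuous derivative `min 1 (max 0 (2 - ε r))`, and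
`1 - min 1 (max 0 (2 - ε r)) ≤ ε r` for `r ≥ 0`.
-/

noncomputable def qtrunc (ε : ℝ) (r : ℝ) : ℝ :=
  if r < 1 / ε then r
  else if r < 2 / ε then -(ε / 2) * (r - 2 / ε) ^ 2 + 3 / (2 * ε)
  else 3 / (2 * ε)

open Set Filter Topology

theorem HasDerivAt.of_eventuallyEq_nhdsLE_nhdsGE {F : Type*} [NormedAddCommGroup F]
    [NormedSpace ℝ F] {f g h : ℝ → F} {f' : F} {a : ℝ} (hg : HasDerivAt g f' a)
    (hh : HasDerivAt h f' a) (hfg : f =ᶠ[𝓝[≤] a] g) (hfh : f =ᶠ[𝓝[≥] a] h) :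
    HasDerivAt f f' a := by
  have hle := hg.hasDerivWithinAt.congr_of_eventuallyEq hfg
    (hfg.eq_of_nhdsWithin (mem_Iic.2 le_rfl))
  have hge := hh.hasDerivWithinAt.congr_of_eventuallyEq hfh
    (hfh.eq_of_nhdsWithin (mem_Ici.2 le_rfl))
  simpa only [Iic_union_Ici, hasDerivWithinAt_univ] using hle.union hge

namespace Qtrunc

variable {ε r : ℝ}

noncomputable def mid (ε s : ℝ) : ℝ := -(ε / 2) * (s - 2 / ε) ^ 2 + 3 / (2 * ε)

noncomputable def slope (ε r : ℝ) : ℝ := min 1 (max 0 (2 - ε * r))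

theorem hasDerivAt_mid (hε : ε ≠ 0) (r : ℝ) : HasDerivAt (mid ε) (2 - ε * r) r := by
  refine (((((hasDerivAt_id' r).sub_const (2 / ε)).pow 2).const_mul (-(ε / 2))).add_const
    (3 / (2 * ε))).congr_deriv ?_
  push_cast
  field_simp
  ring

theorem mid_one_div (hε : ε ≠ 0) : mid ε (1 / ε) = 1 / ε := by
  rw [mid]
  field_simp
  ring

theorem slope_of_le_one (h : ε * r ≤ 1) : slope ε r = 1 := by
  rw [slope, max_eq_right (by linarith), min_eq_left (by linarith)]

theorem slope_of_one_le_of_le_two (h₁ : 1 ≤ ε * r) (h₂ : ε * r ≤ 2) :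
    slope ε r = 2 - ε * r := by
  rw [slope, max_eq_right (by linarith), min_eq_right (by linarith)]

theorem slope_of_two_le (h : 2 ≤ ε * r) : slope ε r = 0 := by
  rw [slope, max_eq_left (by linarith), min_eq_right zero_le_one]

theorem continuous_slope : Continuous (slope ε) := by
  unfold slope
  fun_prop

theorem abs_slope_sub_one_le (h : 0 ≤ ε * r) : |slope ε r - 1| ≤ 2 * ε * r := by
  have hle : slope ε r ≤ 1 := min_le_left _ _
  rw [abs_sub_comm, abs_of_nonneg (sub_nonneg.2 hle), sub_le_comm, slope, le_min_iff, le_max_iff]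
  constructor
  · linarith
  · right; linarith

section

variable (hε : 0 < ε)
include hε

theorem one_div_lt_two_div : 1 / ε < 2 / ε := div_lt_div_of_pos_right one_lt_two hε

theorem qtrunc_eqOn_Iic : EqOn (qtrunc ε) id (Iic (1 / ε)) := by
  intro s hs
  rcases (mem_Iic.1 hs).lt_or_eq with hs | rfl
  · exact if_pos hs
  · rw [qtrunc, if_neg (lt_irrefl _), if_pos (one_div_lt_two_div hε)]
    exact mid_one_div hε.ne'

theorem qtrunc_eqOn_Icc : EqOn (qtrunc ε) (mid ε) (Icc (1 / ε) (2 / ε)) := by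
  rintro s ⟨hs₁, hs₂⟩
  rcases hs₂.lt_or_eq with hs₂ | rfl
  · rw [qtrunc, if_neg hs₁.not_gt, if_pos hs₂, mid]
  · rw [qtrunc, if_neg (one_div_lt_two_div hε).not_gt, if_neg (lt_irrefl _), mid]
    ring

theorem qtrunc_eqOn_Ici : EqOn (qtrunc ε) (fun _ ↦ 3 / (2 * ε)) (Ici (2 / ε)) := by
  intro s hs
  rw [qtrunc, if_neg (by linarith [one_div_lt_two_div hε, mem_Ici.1 hs]), if_neg (not_lt.2 hs)]

theorem hasDerivAt_qtrunc (r : ℝ) : HasDerivAt (qtrunc ε) (slope ε r) r := by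
  have h12 := one_div_lt_two_div hε
  have hmid := hasDerivAt_mid hε.ne'
  have hlin {l : Filter ℝ} := (qtrunc_eqOn_Iic hε).eventuallyEq_of_mem (l := l)
  have hpar {l : Filter ℝ} := (qtrunc_eqOn_Icc hε).eventuallyEq_of_mem (l := l)
  have hconst {l : Filter ℝ} := (qtrunc_eqOn_Ici hε).eventuallyEq_of_mem (l := l)
  rcases lt_trichotomy r (1 / ε) with h₁ | rfl | h₁
  · rw [slope_of_le_one ((lt_div_iff₀' hε).1 h₁).le]
    exact (hasDerivAt_id r).congr_of_eventuallyEq (hlin (Iic_mem_nhds h₁))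
  · have hε₁ : ε * (1 / ε) = 1 := mul_one_div_cancel hε.ne'
    rw [slope_of_le_one hε₁.le]
    refine (hasDerivAt_id _).of_eventuallyEq_nhdsLE_nhdsGE ?_ (hlin self_mem_nhdsWithin)
      (hpar (Icc_mem_nhdsGE h12))
    exact (hmid _).congr_deriv (by rw [hε₁]; norm_num)
  rcases lt_trichotomy r (2 / ε) with h₂ | rfl | h₂
  · rw [slope_of_one_le_of_le_two ((div_lt_iff₀' hε).1 h₁).le
      ((lt_div_iff₀' hε).1 h₂).le]
    exact (hmid r).congr_of_eventuallyEq (hpar (Icc_mem_nhds h₁ h₂))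
  · have hε₂ : ε * (2 / ε) = 2 := mul_div_cancel₀ 2 hε.ne'
    rw [slope_of_two_le hε₂.ge]
    refine HasDerivAt.of_eventuallyEq_nhdsLE_nhdsGE ?_ (hasDerivAt_const _ _)
      (hpar (Icc_mem_nhdsLE h12)) (hconst self_mem_nhdsWithin)
    exact (hmid _).congr_deriv (by rw [hε₂]; norm_num)
  · rw [slope_of_two_le ((div_lt_iff₀' hε).1 h₂).le]
    exact (hasDerivAt_const r _).congr_of_eventuallyEq (hconst (Ici_mem_nhds h₂))

theorem contDiff_qtrunc : ContDiff ℝ 1 (qtrunc ε) := by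
  rw [contDiff_one_iff_deriv]
  refine ⟨fun r ↦ (hasDerivAt_qtrunc hε r).differentiableAt, ?_⟩
  rw [show deriv (qtrunc ε) = slope ε from funext fun r ↦ (hasDerivAt_qtrunc hε r).deriv]
  exact continuous_slope

end

end Qtrunc

open Qtrunc in
theorem qtrunc_C1 (ε : ℝ) (hε : 0 < ε) :
    ContDiffOn ℝ 1 (qtrunc ε) (Set.Ioi 0) ∧
    ∀ r : ℝ, 0 < r → |deriv (fun s => qtrunc ε s - s) r| ≤ 2 * ε * r := by
  refine ⟨(contDiff_qtrunc hε).contDiffOn, fun r hr ↦ ?_⟩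
  rw [((hasDerivAt_qtrunc hε r).fun_sub (hasDerivAt_id' r)).deriv]
  exact abs_slope_sub_one_le (mul_pos hε hr).le
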